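/- arXiv:2012.14167 — 2 statements merged into one kernel-verified Lean document; each statement's English description precedes it below -/
import Mathlib

section
/- (Proposition 2, soundness of the branch-and-bound pruning condition.) Let C̄ ∈ ℝ be any upper bound maintained by the search (the expected cost of the best review plan found so far) and let I₀ ∈ ℤ be the initial inventory level. If for some stage t ∈ {1,…,T+1} the pruning condition ⨅_{i ∈ ℤ} C_t(i) ≥ C̄ holds, then ⨅_{i ∈ ℤ} C_1(i) ≥ C̄, and consequently C_1(I₀) ≥ C̄; hence the review plans extending the current partial assignment cannot improve on C̄. -/
/-!
Since the immediate cost is nonnegative and the demand probabilities sum to one, a Bellman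
step `C_{s+1} ↦ C_s` preserves every constant lower bound. Starting from `C_{T+1} ≡ 0` this makes
all `C_s` nonnegative, so `⨅ i, C_t i` is a genuine infimum (rather than the junk value `0` that
`ℝ` assigns to sets unbounded below) and the pruning condition says `Cbar ≤ C_t` pointwise;
stepping back from stage `t` to stage `1` carries this bound to `C_1`.
-/

open Finset

section
variable {p : ℤ → ℝ} {supp : Finset ℤ}

theorem le_sum_mul_of_forall_le (hp_nonneg : ∀ x, 0 ≤ p x) (hp_sum : ∑ x ∈ supp, p x = 1)
    {c : ℝ} {V : ℤ → ℝ} (hV : ∀ x, c ≤ V x) : c ≤ ∑ x ∈ supp, p x * V x :=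
  calc c = ∑ x ∈ supp, p x * c := by rw [← sum_mul, hp_sum, one_mul]
    _ ≤ ∑ x ∈ supp, p x * V x :=
      sum_le_sum fun x _ => mul_le_mul_of_nonneg_left (hV x) (hp_nonneg x)

theorem immediate_cost_nonneg (hp_nonneg : ∀ x, 0 ≤ p x) {g W K h b : ℝ} (hg : 0 ≤ g)
    (hW : 0 ≤ W) (hK : 0 ≤ K) (hh : 0 ≤ h) (hb : 0 ≤ b) (I Q : ℤ) :
    0 ≤ g * W + (if 0 < Q then K else 0) +
      ∑ x ∈ supp, p x *
        (h * ((max (I + Q - x) 0 : ℤ) : ℝ) + b * ((max (x - I - Q) 0 : ℤ) : ℝ)) := by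
  have hcost : 0 ≤ ∑ x ∈ supp, p x *
      (h * ((max (I + Q - x) 0 : ℤ) : ℝ) + b * ((max (x - I - Q) 0 : ℤ) : ℝ)) :=
    sum_nonneg fun x _ => by have := hp_nonneg x; positivity
  positivity

theorem le_inf'_add_expectation (hp_nonneg : ∀ x, 0 ≤ p x) (hp_sum : ∑ x ∈ supp, p x = 1)
    {S : Finset ℤ} (hS : S.Nonempty) {f V : ℤ → ℝ} (hf : ∀ Q, 0 ≤ f Q) {c : ℝ}
    (hV : ∀ I, c ≤ V I) (I : ℤ) :
    c ≤ S.inf' hS fun Q => f Q + ∑ x ∈ supp, p x * V (I + Q - x) :=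
  le_inf' hS _ fun Q _ => by
    linarith [hf Q, le_sum_mul_of_forall_le hp_nonneg hp_sum fun x => hV (I + Q - x)]

end

/-- Proposition 2, soundness of the branch-and-bound pruning
condition: if for some stage `t` the pruning condition
`⨅_{i ∈ ℤ} C_t(i) ≥ C̄` holds, then `⨅_{i ∈ ℤ} C_1(i) ≥ C̄` and consequently
`C_1(I₀) ≥ C̄`. -/
theorem pruning_condition_sound
    -- horizon
    (T : ℕ)
    -- demand distributions with finite support `supp t`
    (p : ℕ → ℤ → ℝ) (supp : ℕ → Finset ℤ)
    (hp_nonneg : ∀ t x, 0 ≤ p t x)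
    (hp_sum : ∀ t, 1 ≤ t → t ≤ T → ∑ x ∈ supp t, p t x = 1)
    -- review plan γ : {1,…,T} → {0,1}
    (γ : ℕ → ℕ)
    -- costs and order bound
    (W K h b : ℝ) (hW : 0 ≤ W) (hK : 0 ≤ K) (hh : 0 ≤ h) (hb : 0 ≤ b)
    (M : ℕ)
    -- expected immediate cost
    (f : ℕ → ℤ → ℤ → ℝ)
    (hf : ∀ t I Q, f t I Q =
      (γ t : ℝ) * W + (if 0 < Q then K else 0) +
      ∑ x ∈ supp t, p t x *
        (h * ((max (I + Q - x) 0 : ℤ) : ℝ) + b * ((max (x - I - Q) 0 : ℤ) : ℝ)))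
    -- cost-to-go functions: boundary condition and Bellman recursion
    (C : ℕ → ℤ → ℝ)
    (hC_boundary : ∀ I : ℤ, C (T + 1) I = 0)
    (hC_rec : ∀ t, 1 ≤ t → t ≤ T → ∀ I : ℤ,
      C t I = (Finset.Icc (0 : ℤ) ((M : ℤ) * (γ t : ℤ))).inf'
        (Finset.nonempty_Icc.mpr (by positivity))
        (fun Q => f t I Q + ∑ x ∈ supp t, p t x * C (t + 1) (I + Q - x)))
    -- the claim
    (Cbar : ℝ) (I₀ : ℤ)
    (t : ℕ) (ht1 : 1 ≤ t) (htT : t ≤ T + 1)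
    (hprune : Cbar ≤ ⨅ i : ℤ, C t i) :
    Cbar ≤ (⨅ i : ℤ, C 1 i) ∧ Cbar ≤ C 1 I₀ := by
  have step (c : ℝ) (s : ℕ) (hs1 : 1 ≤ s) (hsT : s ≤ T) (hV : ∀ I, c ≤ C (s + 1) I) (I : ℤ) :
      c ≤ C s I := by
    rw [hC_rec s hs1 hsT I]
    refine le_inf'_add_expectation (hp_nonneg s) (hp_sum s hs1 hsT) _ (fun Q => ?_) hV I
    rw [hf]
    exact immediate_cost_nonneg (hp_nonneg s) (Nat.cast_nonneg _) hW hK hh hb I Q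
  have back (c : ℝ) {r s : ℕ} (hrs : r ≤ s) (hsT : s ≤ T + 1) (hV : ∀ I, c ≤ C s I) :
      1 ≤ r → ∀ I, c ≤ C r I := by
    induction hrs using Nat.decreasingInduction with
    | self => exact fun _ => hV
    | of_succ k hks ih => exact fun hk => step c k hk (by omega) (ih (by omega))
  have hbdd : BddBelow (Set.range (C t)) :=
    ⟨0, Set.forall_mem_range.2 <| back 0 htT le_rfl (fun I => (hC_boundary I).ge) ht1⟩
  have hC1 : ∀ I, Cbar ≤ C 1 I := back Cbar ht1 htT ((le_ciInf_iff hbdd).1 hprune) le_rfl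
  exact ⟨le_ciInf hC1, hC1 I₀⟩
end

section
/- (Soundness of the refined pruning condition with lower bounds.) Let t ∈ {1,…,T}, let C̄ ∈ ℝ and let MC : ℤ → ℝ be a function bounded below, and suppose the total expected cost of the plan decomposes through the closing inventory at period t as follows: there exist a probability mass function D : ℤ → ℝ with D(I) ≥ 0, finite support and Σ_I D(I) = 1 (the distribution of the closing inventory level at period t under the policy), and a function A : ℤ → ℝ with A(I) ≥ MC(I) for every I in the support of D (the expected cost incurred in periods 1,…,t given closing inventory I), such that C_1(I₀) = Σ_I D(I)·( A(I) + C_{t+1}(I) ). If the refined pruning condition ⨅_{I ∈ ℤ} ( C_{t+1}(I) + MC(I) ) ≥ C̄ holds, then C_1(I₀) ≥ C̄. -/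
/-!
Every cost-to-go function is nonnegative by backward induction, since immediate costs
are nonnegative and the Bellman operator takes a minimum of nonnegative averages. So
`I ↦ C_{t+1}(I) + MC(I)` is bounded below, its infimum bounds each of its values, and
`C_1(I₀)` is a `D`-average of values `A(I) + C_{t+1}(I) ≥ C_{t+1}(I) + MC(I) ≥ C̄`.
-/

open Finset

theorem le_sum_mul_of_forall_le_s7 {ι R : Type*} [Semiring R] [PartialOrder R] [IsOrderedRing R]
    {s : Finset ι} {w g : ι → R} {c : R} (hw : ∀ i ∈ s, 0 ≤ w i) (hw_sum : ∑ i ∈ s, w i = 1)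
    (hle : ∀ i ∈ s, w i ≠ 0 → c ≤ g i) :
    c ≤ ∑ i ∈ s, w i * g i := by
  calc c = ∑ i ∈ s, w i * c := by rw [← sum_mul, hw_sum, one_mul]
    _ ≤ ∑ i ∈ s, w i * g i := by
      refine sum_le_sum fun i hi => ?_
      rcases eq_or_ne (w i) 0 with hwi | hwi
      · simp [hwi]
      · exact mul_le_mul_of_nonneg_left (hle i hi hwi) (hw i hi)

theorem inventoryCost_nonneg {S : Finset ℤ} {p : ℤ → ℝ} (hp : ∀ x, 0 ≤ p x) (γ : ℕ)
    {W K h b : ℝ} (hW : 0 ≤ W) (hK : 0 ≤ K) (hh : 0 ≤ h) (hb : 0 ≤ b) (I Q : ℤ) :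
    0 ≤ (γ : ℝ) * W + (if 0 < Q then K else 0) +
      ∑ x ∈ S, p x *
        (h * ((max (I + Q - x) 0 : ℤ) : ℝ) + b * ((max (x - I - Q) 0 : ℤ) : ℝ)) := by
  have hsum := sum_nonneg fun x (_ : x ∈ S) => mul_nonneg (hp x) <|
    add_nonneg (mul_nonneg hh (Int.cast_nonneg (le_max_right (I + Q - x) 0)))
      (mul_nonneg hb (Int.cast_nonneg (le_max_right (x - I - Q) 0)))
  exact add_nonneg (add_nonneg (mul_nonneg γ.cast_nonneg hW) (ite_nonneg hK le_rfl)) hsum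

theorem costToGo_nonneg {T : ℕ} {c : ℕ → ℤ → ℤ → ℝ} {p : ℕ → ℤ → ℝ} {supp : ℕ → Finset ℤ}
    {Act : ℕ → Finset ℤ} (hAct : ∀ s, (Act s).Nonempty) {C : ℕ → ℤ → ℝ}
    (hc : ∀ s I Q, 1 ≤ s → s ≤ T → 0 ≤ c s I Q) (hp : ∀ s x, 0 ≤ p s x)
    (hC_boundary : ∀ I, C (T + 1) I = 0)
    (hC_rec : ∀ s, 1 ≤ s → s ≤ T → ∀ I, C s I = (Act s).inf' (hAct s)
      (fun Q => c s I Q + ∑ x ∈ supp s, p s x * C (s + 1) (I + Q - x)))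
    {s : ℕ} (hs1 : 1 ≤ s) (hsT : s ≤ T + 1) (I : ℤ) :
    0 ≤ C s I := by
  refine Nat.decreasingInduction' (P := fun k => ∀ I, 0 ≤ C k I) (fun k hkT hk1 ih I => ?_)
    hsT (fun I => (hC_boundary I).ge) I
  have hk : 1 ≤ k ∧ k ≤ T := ⟨hs1.trans hk1, Nat.lt_succ_iff.mp hkT⟩
  rw [hC_rec k hk.1 hk.2]
  exact le_inf' _ _ fun Q _ => add_nonneg (hc k I Q hk.1 hk.2)
    (sum_nonneg fun x _ => mul_nonneg (hp k x) (ih _))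

/-- soundness of the refined pruning condition with lower bounds:
if the total expected cost decomposes through the closing inventory at period
`t` as `C_1(I₀) = Σ_I D(I)·(A(I) + C_{t+1}(I))` with `D` the pmf of the
closing inventory at period `t`, `A(I) ≥ MC(I)` on the support of `D`, and
the refined pruning condition `⨅_I (C_{t+1}(I) + MC(I)) ≥ C̄` holds, then
`C_1(I₀) ≥ C̄`. -/
theorem refined_pruning_condition_sound
    -- horizon
    (T : ℕ)
    -- demand distributions with finite support `supp t`
    (p : ℕ → ℤ → ℝ) (supp : ℕ → Finset ℤ)
    (hp_nonneg : ∀ t x, 0 ≤ p t x)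
    -- review plan γ : {1,…,T} → {0,1}
    (γ : ℕ → ℕ)
    -- costs and order bound
    (W K h b : ℝ) (hW : 0 ≤ W) (hK : 0 ≤ K) (hh : 0 ≤ h) (hb : 0 ≤ b)
    (M : ℕ)
    -- expected immediate cost
    (f : ℕ → ℤ → ℤ → ℝ)
    (hf : ∀ t I Q, f t I Q =
      (γ t : ℝ) * W + (if 0 < Q then K else 0) +
      ∑ x ∈ supp t, p t x *
        (h * ((max (I + Q - x) 0 : ℤ) : ℝ) + b * ((max (x - I - Q) 0 : ℤ) : ℝ)))
    -- cost-to-go functions: boundary condition and Bellman recursion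
    (C : ℕ → ℤ → ℝ)
    (hC_boundary : ∀ I : ℤ, C (T + 1) I = 0)
    (hC_rec : ∀ t, 1 ≤ t → t ≤ T → ∀ I : ℤ,
      C t I = (Finset.Icc (0 : ℤ) ((M : ℤ) * (γ t : ℤ))).inf'
        (Finset.nonempty_Icc.mpr (by positivity))
        (fun Q => f t I Q + ∑ x ∈ supp t, p t x * C (t + 1) (I + Q - x)))
    -- initial inventory level
    (I₀ : ℤ)
    -- the stage, the incumbent upper bound, and the lower-bound function MC
    (t : ℕ) (htT : t ≤ T)
    (Cbar : ℝ)
    (MC : ℤ → ℝ) (hMC_bdd : BddBelow (Set.range MC))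
    -- distribution D of the closing inventory level at period t under the plan
    (D : ℤ → ℝ) (Dsupp : Finset ℤ)
    (hD_nonneg : ∀ I, 0 ≤ D I)
    (hD_sum : ∑ I ∈ Dsupp, D I = 1)
    -- expected cost A(I) incurred in periods 1,…,t given closing inventory I
    (A : ℤ → ℝ)
    (hA : ∀ I, D I ≠ 0 → MC I ≤ A I)
    -- decomposition of the total expected cost of the plan
    (hdecomp : C 1 I₀ = ∑ I ∈ Dsupp, D I * (A I + C (t + 1) I))
    -- refined pruning condition
    (hprune : Cbar ≤ ⨅ I : ℤ, (C (t + 1) I + MC I)) :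
    Cbar ≤ C 1 I₀ := by
  have hC_nonneg : ∀ I, 0 ≤ C (t + 1) I :=
    costToGo_nonneg (fun s => nonempty_Icc.mpr (by positivity))
      (fun s I Q _ _ => hf s I Q ▸ inventoryCost_nonneg (hp_nonneg s) (γ s) hW hK hh hb I Q)
      hp_nonneg hC_boundary hC_rec (Nat.le_add_left 1 t) (Nat.succ_le_succ htT)
  obtain ⟨m, hm⟩ := hMC_bdd
  have hbdd : BddBelow (Set.range fun I => C (t + 1) I + MC I) := by
    refine ⟨m, ?_⟩
    rintro _ ⟨I, rfl⟩
    linarith [hC_nonneg I, hm ⟨I, rfl⟩]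
  rw [hdecomp]
  refine le_sum_mul_of_forall_le_s7 (fun I _ => hD_nonneg I) hD_sum fun I _ hI => ?_
  linarith [hA I hI, hprune.trans (ciInf_le hbdd I)]
end
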